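/- For all nonnegative integers m, n and complex z₁, z₂, q: z₁ H_{m,n}(z₁, z₂ | q) = q^m (1 - q^n) H_{m,n-1}(z₁, z₂ | q) + H_{m+1,n}(z₁, z₂ | q), where the term with n-1 is interpreted as 0 when n = 0. -/

import Mathlib

/-!
Compare the coefficients of `z1 ^ (m + 1 - k) * z2 ^ (n - k)` on both sides. The second
q-Pascal rule `[m+1, k] = q^(m-k+1) [m, k-1] + [m, k]` turns the difference of the coefficients of
`z1 * H_{m,n}` and `H_{m+1,n}` into `-q^(m-k+1) [m, k-1] [n, k] (-1)^k q^(k choose 2) (q;q)_k`, and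
absorption `[n, k] (1 - q^k) = (1 - q^n) [n-1, k-1]` peels one factor off `(q;q)_k`. Since
`k choose 2 = (k-1 choose 2) + (k-1)`, the powers of `q` collect to `q^m`, leaving the `(k-1)`-th
coefficient of `q^m (1 - q^n) H_{m,n-1}`.
-/

open Finset Filter

noncomputable def qPoch (a q : ℂ) (n : ℕ) : ℂ :=
  ∏ j ∈ Finset.range n, (1 - a * q ^ j)

noncomputable def qbinom (q : ℂ) : ℕ → ℕ → ℂ
  | _, 0 => 1
  | 0, _ + 1 => 0
  | m + 1, k + 1 => qbinom q m k + q ^ (k + 1) * qbinom q m (k + 1)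

/-- The first q-analogue of the 2D Hermite polynomials. -/
noncomputable def H2D (q z1 z2 : ℂ) (m n : ℕ) : ℂ :=
  ∑ k ∈ Finset.range (min m n + 1),
    qbinom q m k * qbinom q n k * (-1) ^ k * q ^ (k.choose 2) * qPoch q q k *
      z1 ^ (m - k) * z2 ^ (n - k)

/-- The second q-analogue of the 2D Hermite polynomials. -/
noncomputable def h2D (q z1 z2 : ℂ) (m n : ℕ) : ℂ :=
  ∑ j ∈ Finset.range (min m n + 1),
    qbinom q m j * qbinom q n j * q ^ ((m - j) * (n - j)) * (-1) ^ j * qPoch q q j *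
      z1 ^ (m - j) * z2 ^ (n - j)

/-- The q-2D ultraspherical (q-disk / q-Zernike) polynomials. -/
noncomputable def p2D (q b z1 z2 : ℂ) (m n : ℕ) : ℂ :=
  ∑ k ∈ Finset.range (min m n + 1),
    qbinom q m k * qbinom q n k * (-1) ^ k * q ^ (k.choose 2) * qPoch q q k *
      qPoch (b * q) q (m + n - k) * z1 ^ (m - k) * z2 ^ (n - k)

/-- The infinite q-Pochhammer product (a;q)_∞. -/
noncomputable def qPochInf (a q : ℂ) : ℂ :=
  ∏' j : ℕ, (1 - a * q ^ j)

section QBinom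

variable (q : ℂ)

@[simp] lemma qbinom_zero_right (m : ℕ) : qbinom q m 0 = 1 := by cases m <;> rfl

@[simp] lemma qbinom_zero_succ (k : ℕ) : qbinom q 0 (k + 1) = 0 := rfl

lemma qbinom_succ_succ (m k : ℕ) :
    qbinom q (m + 1) (k + 1) = qbinom q m k + q ^ (k + 1) * qbinom q m (k + 1) := rfl

lemma qbinom_eq_zero_of_lt : ∀ {m k : ℕ}, m < k → qbinom q m k = 0
  | 0, _ + 1, _ => rfl
  | m + 1, k + 1, h => by
    rw [qbinom_succ_succ, qbinom_eq_zero_of_lt (by omega), qbinom_eq_zero_of_lt (by omega)]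
    ring

lemma qbinom_succ_succ' (m k : ℕ) :
    qbinom q (m + 1) (k + 1) = q ^ (m - k) * qbinom q m k + qbinom q m (k + 1) := by
  induction m generalizing k with
  | zero => cases k <;> simp [qbinom_succ_succ]
  | succ m ih =>
    cases k with
    | zero =>
      have h₁ := qbinom_succ_succ q (m + 1) 0
      have h₂ := qbinom_succ_succ q m 0
      have h₃ := ih 0
      simp only [qbinom_zero_right, Nat.sub_zero, zero_add, pow_one] at h₁ h₂ h₃ ⊢
      linear_combination h₁ + q * h₃ - h₂
    | succ k =>
      rw [qbinom_succ_succ q (m + 1) (k + 1)]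
      rcases lt_or_ge k m with hkm | hmk
      · obtain ⟨d, rfl⟩ : ∃ d, m = k + 1 + d := ⟨m - (k + 1), by omega⟩
        have ih₁ := ih k
        have ih₂ := ih (k + 1)
        rw [show k + 1 + d - k = d + 1 by omega] at ih₁
        rw [show k + 1 + d - (k + 1) = d by omega] at ih₂
        rw [show k + 1 + d + 1 - (k + 1) = d + 1 by omega]
        linear_combination ih₁ + q ^ (k + 2) * ih₂ - q ^ (d + 1) * qbinom_succ_succ q (k + 1 + d) k
          - qbinom_succ_succ q (k + 1 + d) (k + 1)
      · rw [qbinom_eq_zero_of_lt q (show m + 1 < k + 2 by omega), Nat.sub_eq_zero_of_le (by omega)]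
        ring

/-- Absorption: subtract `q ^ (k + 1)` times the second Pascal rule from the first. -/
lemma one_sub_pow_mul_qbinom_succ_succ (n k : ℕ) :
    (1 - q ^ (k + 1)) * qbinom q (n + 1) (k + 1) = (1 - q ^ (n + 1)) * qbinom q n k := by
  rcases le_or_gt k n with hkn | hnk
  · have hpow : q ^ (k + 1) * q ^ (n - k) = q ^ (n + 1) := by
      rw [← pow_add]; congr 1; omega
    linear_combination qbinom_succ_succ q n k - q ^ (k + 1) * qbinom_succ_succ' q n k
      - qbinom q n k * hpow
  · rw [qbinom_eq_zero_of_lt q hnk, qbinom_eq_zero_of_lt q (by omega : n + 1 < k + 1)]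
    ring

end QBinom

lemma qPoch_succ (a q : ℂ) (n : ℕ) : qPoch a q (n + 1) = qPoch a q n * (1 - a * q ^ n) :=
  Finset.prod_range_succ _ _

section H2D

variable (q z1 z2 : ℂ)

noncomputable def H2DCoeff (m n k : ℕ) : ℂ :=
  qbinom q m k * qbinom q n k * (-1) ^ k * q ^ (k.choose 2) * qPoch q q k

@[simp] lemma H2DCoeff_zero (m n : ℕ) : H2DCoeff q m n 0 = 1 := by
  simp [H2DCoeff, qPoch]

lemma H2DCoeff_eq_zero_of_lt {m n k : ℕ} (h : min m n < k) : H2DCoeff q m n k = 0 := by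
  rcases min_lt_iff.1 h with h | h <;> simp [H2DCoeff, qbinom_eq_zero_of_lt q h]

lemma H2DCoeff_sub_H2DCoeff_succ_left (m n k : ℕ) :
    H2DCoeff q m (n + 1) (k + 1) - H2DCoeff q (m + 1) (n + 1) (k + 1) =
      q ^ m * (1 - q ^ (n + 1)) * H2DCoeff q m n k := by
  rcases le_or_gt k m with hkm | hmk
  · have hchoose : (k + 1).choose 2 = k.choose 2 + k := by
      rw [Nat.choose_succ_succ, Nat.choose_one_right, add_comm]
    rw [← pow_mul_pow_sub q hkm]
    simp only [H2DCoeff, qPoch_succ, hchoose, pow_add]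
    linear_combination
      (-(qbinom q (n + 1) (k + 1)) * (-1) ^ (k + 1) * q ^ (k.choose 2 + k) *
        (qPoch q q k * (1 - q * q ^ k))) * qbinom_succ_succ' q m k
      + (q ^ k * q ^ (m - k) * qbinom q m k * (-1) ^ k * q ^ (k.choose 2) * qPoch q q k) *
        one_sub_pow_mul_qbinom_succ_succ q n k
  · simp [H2DCoeff, qbinom_eq_zero_of_lt q hmk, qbinom_eq_zero_of_lt q (Nat.succ_lt_succ hmk),
      qbinom_eq_zero_of_lt q (hmk.trans (Nat.lt_succ_self k))]

lemma H2D_eq_sum_range {m n N : ℕ} (h : min m n < N) :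
    H2D q z1 z2 m n = ∑ k ∈ range N, H2DCoeff q m n k * z1 ^ (m - k) * z2 ^ (n - k) := by
  refine Finset.sum_subset (range_subset_range.2 h) fun k _ hk => ?_
  change H2DCoeff q m n k * _ * _ = 0
  rw [H2DCoeff_eq_zero_of_lt q (by simp only [mem_range] at hk; omega), zero_mul, zero_mul]

lemma H2D_zero_right (m : ℕ) : H2D q z1 z2 m 0 = z1 ^ m := by
  simp [H2D, qPoch]

lemma mul_H2D_sub_H2D_succ_left (m n : ℕ) :
    z1 * H2D q z1 z2 m n - H2D q z1 z2 (m + 1) n =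
      ∑ k ∈ range (m + 2),
        (H2DCoeff q m n k - H2DCoeff q (m + 1) n k) * z1 ^ (m + 1 - k) * z2 ^ (n - k) := by
  rw [H2D_eq_sum_range q z1 z2 (N := m + 2) (by omega),
    H2D_eq_sum_range q z1 z2 (N := m + 2) (by omega), mul_sum, ← sum_sub_distrib]
  refine sum_congr rfl fun k _ => ?_
  rcases le_or_gt k m with hkm | hmk
  · rw [show m + 1 - k = m - k + 1 by omega]
    ring
  · rw [H2DCoeff_eq_zero_of_lt q (by omega : min m n < k)]
    ring

end H2D

theorem stmt4 (m n : ℕ) (z1 z2 q : ℂ) :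
    z1 * H2D q z1 z2 m n =
      q ^ m * (1 - q ^ n) * H2D q z1 z2 m (n - 1) + H2D q z1 z2 (m + 1) n := by
  cases n with
  | zero => simp [H2D_zero_right, pow_succ, mul_comm]
  | succ n =>
    rw [Nat.add_sub_cancel, ← sub_eq_iff_eq_add, mul_H2D_sub_H2D_succ_left, sum_range_succ',
      H2D_eq_sum_range q z1 z2 (N := m + 1) (by omega), mul_sum]
    simp only [H2DCoeff_zero, sub_self, zero_mul, add_zero, H2DCoeff_sub_H2DCoeff_succ_left]
    refine sum_congr rfl fun k _ => ?_
    rw [show m + 1 - (k + 1) = m - k by omega, Nat.add_sub_add_right]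
    ring
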